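/- Let k ≥ 1 and j ≥ 1 be integers. Then for every t > 0, the (j−1)-st derivative of f_k at t satisfies f_k^{(j−1)}(t) = (t^{k−j} e^{−t²/2} / (Γ(k/2) 2^{(k−2)/2})) · Σ_{l=0}^{⌊(j−1)/2⌋} Σ_{m=0}^{j−1−2l} 𝟙{k ≥ j−m−2l} · binom(k−1, j−1−m−2l) · ((−1)^{m+l} (j−1)! / (m! l! 2^l)) · t^{2m+2l}. -/

import Mathlib

open Real

/-- The density of the square root of a `χ²_m` random variable:
`f_m(t) = t^{m−1} e^{−t²/2} / (Γ(m/2) 2^{(m−2)/2})`. -/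
noncomputable def chiDens (m : ℕ) (t : ℝ) : ℝ :=
  t ^ (m - 1) * Real.exp (-t ^ 2 / 2) /
    (Real.Gamma ((m : ℝ) / 2) * (2 : ℝ) ^ (((m : ℝ) - 2) / 2))

/-!
Up to the constant `Γ(k/2) 2^{(k-2)/2}`, `f_k(t) = t^c e^{-t²/2}` with `c = k - 1`. By Leibniz'
rule its `n`-th derivative is `∑_{a+b=n} C(n,a) c(c-1)⋯(c-a+1) t^{c-a} (-1)^b He_b(t) e^{-t²/2}`,
where `He_b = hermite b` is the probabilists' Hermite polynomial, whose coefficient of `t^{b-2l}`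
is `(-1)^l b! / ((b-2l)! l! 2^l)`. Writing `b = m + 2l` and using
`C(n,a) c(c-1)⋯(c-a+1) b! = n! C(c,a)` gives the double sum; the indicator only removes terms
with `a > c`, whose binomial coefficient vanishes anyway.
-/

open Nat Finset Polynomial

theorem Nat.factorial_two_mul_eq (l : ℕ) : (2 * l)! = 2 ^ l * l ! * (2 * l - 1)‼ := by
  rcases l with _ | l
  · rfl
  · rw [show 2 * (l + 1) = (2 * l + 1) + 1 by ring, factorial_eq_mul_doubleFactorial,
      show 2 * l + 1 + 1 = 2 * (l + 1) by ring, doubleFactorial_two_mul]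
    rfl

theorem Nat.doubleFactorial_mul_choose_mul (l m : ℕ) :
    (2 * l - 1)‼ * (2 * l + m).choose m * (l ! * m ! * 2 ^ l) = (2 * l + m)! := by
  rw [← add_choose_mul_factorial_mul_factorial, factorial_two_mul_eq]
  ring

namespace Polynomial

theorem coeff_hermite_sub_two_mul {K : Type*} [Field K] [CharZero K] {n l : ℕ} (h : 2 * l ≤ n) :
    ((hermite n).coeff (n - 2 * l) : K) = (-1) ^ l * n ! / ((n - 2 * l)! * l ! * 2 ^ l) := by
  obtain ⟨m, rfl⟩ := Nat.exists_eq_add_of_le h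
  rw [Nat.add_sub_cancel_left, coeff_hermite_explicit, eq_div_iff (by norm_cast; positivity),
    ← doubleFactorial_mul_choose_mul]
  push_cast
  ring

theorem aeval_hermite_eq_sum {K : Type*} [Field K] [CharZero K] (n : ℕ) (x : K) :
    aeval x (hermite n) = ∑ l ∈ range (n / 2 + 1),
      (-1) ^ l * n ! / ((n - 2 * l)! * l ! * 2 ^ l) * x ^ (n - 2 * l) := by
  have hinj : Set.InjOn (fun l => n - 2 * l) (range (n / 2 + 1)) := by
    intro a ha b hb (hab : n - 2 * a = n - 2 * b)
    simp only [coe_range, Set.mem_Iio] at ha hb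
    omega
  rw [aeval_eq_sum_range, natDegree_hermite,
    ← sum_subset (s₁ := (range (n / 2 + 1)).image fun l => n - 2 * l), sum_image hinj]
  · refine sum_congr rfl fun l hl => ?_
    rw [zsmul_eq_mul, coeff_hermite_sub_two_mul (by rw [mem_range] at hl; omega)]
  · simp only [subset_iff, mem_image, mem_range]
    rintro _ ⟨l, hl, rfl⟩
    omega
  · intro i hi hi'
    simp only [mem_image, mem_range, not_exists, not_and] at hi hi'
    rw [coeff_hermite_of_odd_add, zero_smul]
    by_contra h
    obtain ⟨r, hr⟩ := Nat.not_odd_iff_even.mp h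
    exact hi' (n - r) (by omega) (by omega)

theorem iteratedDeriv_gaussian_eq_hermite_mul_gaussian (n : ℕ) (x : ℝ) :
    iteratedDeriv n (fun y => exp (-(y ^ 2 / 2))) x =
      (-1) ^ n * aeval x (hermite n) * exp (-(x ^ 2 / 2)) := by
  rw [iteratedDeriv_eq_iterate, deriv_gaussian_eq_hermite_mul_gaussian]

end Polynomial

theorem iteratedDeriv_pow_mul_gaussian (c n : ℕ) (x : ℝ) :
    iteratedDeriv n (fun y => y ^ c * exp (-(y ^ 2 / 2))) x =
      ∑ a ∈ range (n + 1), n.choose a * c.descFactorial a * x ^ (c - a) *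
        ((-1) ^ (n - a) * aeval x (hermite (n - a))) * exp (-(x ^ 2 / 2)) := by
  rw [iteratedDeriv_fun_mul (contDiff_id.pow c).contDiffAt (by fun_prop)]
  refine sum_congr rfl fun a _ => ?_
  rw [iteratedDeriv_gaussian_eq_hermite_mul_gaussian]
  simp only [iteratedDeriv_pow]
  ring

theorem Finset.sum_range_sum_range_half_comm {M : Type*} [AddCommMonoid M] (n : ℕ)
    (F : ℕ → ℕ → M) :
    ∑ b ∈ range (n + 1), ∑ l ∈ range (b / 2 + 1), F b l =
      ∑ l ∈ range (n / 2 + 1), ∑ m ∈ range (n + 1 - 2 * l), F (m + 2 * l) l := by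
  rw [sum_sigma', sum_sigma']
  refine sum_bij' (fun p _ => ⟨p.2, p.1 - 2 * p.2⟩) (fun q _ => ⟨q.2 + 2 * q.1, q.1⟩)
    ?_ ?_ ?_ ?_ ?_ <;> rintro ⟨x, y⟩ h <;> simp only [mem_sigma, mem_range] at h ⊢
  · omega
  · omega
  · rw [Nat.sub_add_cancel (by omega)]
  · rw [Nat.add_sub_cancel]
  · rw [Nat.sub_add_cancel (by omega)]

theorem Nat.choose_mul_descFactorial_mul_factorial {n a b : ℕ} (h : a + b = n) (c : ℕ) :
    n.choose a * c.descFactorial a * b ! = n ! * c.choose a := by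
  rw [descFactorial_eq_factorial_mul_choose,
    ← choose_mul_factorial_mul_factorial (by omega : a ≤ n), show n - a = b by omega]
  ring

theorem leibniz_hermite_summand_eq {c n m l : ℕ} (h : m + 2 * l ≤ n) {x : ℝ} (hx : x ≠ 0) :
    n.choose (n - (m + 2 * l)) * c.descFactorial (n - (m + 2 * l)) *
        x ^ (c - (n - (m + 2 * l))) *
        ((-1) ^ (m + 2 * l) * ((-1) ^ l * (m + 2 * l)! / ((m + 2 * l - 2 * l)! * l ! * 2 ^ l) *
          x ^ (m + 2 * l - 2 * l))) =
      c.choose (n - m - 2 * l) * ((-1) ^ (m + l) * n ! / (m ! * l ! * 2 ^ l)) *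
        (x ^ ((c : ℤ) - n) * x ^ (2 * m + 2 * l)) := by
  set a := n - (m + 2 * l)
  have hfac : (n.choose a * c.descFactorial a * (m + 2 * l)! : ℝ) = n ! * c.choose a := by
    exact_mod_cast choose_mul_descFactorial_mul_factorial (by omega) c
  rw [show n - m - 2 * l = a by omega, Nat.add_sub_cancel, pow_add (-1 : ℝ) m, pow_mul,
    neg_one_sq, one_pow, mul_one]
  rcases le_or_gt a c with hac | hca
  · have hpow : x ^ ((c : ℤ) - n) * x ^ (2 * m + 2 * l) = x ^ (c - a) * x ^ m := by
      rw [← zpow_natCast, ← zpow_natCast, ← zpow_natCast, ← zpow_add₀ hx, ← zpow_add₀ hx]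
      congr 1
      omega
    rw [hpow]
    linear_combination (x ^ (c - a) * x ^ m * (-1) ^ (m + l) / (m ! * l ! * 2 ^ l)) * hfac
  · simp [descFactorial_eq_zero_iff_lt.mpr hca, choose_eq_zero_of_lt hca]

theorem iteratedDeriv_pow_mul_gaussian_eq_sum (c n : ℕ) {x : ℝ} (hx : x ≠ 0) :
    iteratedDeriv n (fun y => y ^ c * exp (-(y ^ 2 / 2))) x =
      x ^ ((c : ℤ) - n) * exp (-(x ^ 2 / 2)) *
        ∑ l ∈ range (n / 2 + 1), ∑ m ∈ range (n + 1 - 2 * l),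
          c.choose (n - m - 2 * l) * ((-1) ^ (m + l) * n ! / (m ! * l ! * 2 ^ l)) *
            x ^ (2 * m + 2 * l) := by
  rw [iteratedDeriv_pow_mul_gaussian, ← Nat.sum_antidiagonal_eq_sum_range_succ
    (fun a b => n.choose a * c.descFactorial a * x ^ (c - a) *
      ((-1) ^ b * aeval x (hermite b)) * exp (-(x ^ 2 / 2))),
    ← Nat.sum_antidiagonal_swap]
  simp only [Prod.fst_swap, Prod.snd_swap]
  rw [Nat.sum_antidiagonal_eq_sum_range_succ (fun b a => n.choose a * c.descFactorial a *
    x ^ (c - a) * ((-1) ^ b * aeval x (hermite b)) * exp (-(x ^ 2 / 2)))]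
  simp only [aeval_hermite_eq_sum, mul_sum, sum_mul]
  rw [sum_range_sum_range_half_comm]
  refine sum_congr rfl fun l _ => sum_congr rfl fun m hm => ?_
  rw [leibniz_hermite_summand_eq (by rw [mem_range] at hm; omega) hx]
  ring

theorem stmt8 (k j : ℕ) (hk : 1 ≤ k) (hj : 1 ≤ j) (t : ℝ) (ht : 0 < t) :
    iteratedDeriv (j - 1) (chiDens k) t =
      t ^ ((k : ℤ) - j) * Real.exp (-t ^ 2 / 2) /
          (Real.Gamma ((k : ℝ) / 2) * (2 : ℝ) ^ (((k : ℝ) - 2) / 2)) *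
        ∑ l ∈ Finset.range ((j - 1) / 2 + 1), ∑ m ∈ Finset.range (j - 2 * l),
          (if j - m - 2 * l ≤ k then (1 : ℝ) else 0) *
            (Nat.choose (k - 1) (j - 1 - m - 2 * l) : ℝ) *
            ((-1 : ℝ) ^ (m + l) * (Nat.factorial (j - 1) : ℝ) /
              ((Nat.factorial m : ℝ) * (Nat.factorial l : ℝ) * 2 ^ l)) *
            t ^ (2 * m + 2 * l) := by
  obtain ⟨c, rfl⟩ := Nat.exists_eq_add_of_le' hk
  obtain ⟨n, rfl⟩ := Nat.exists_eq_add_of_le' hj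
  have hdens : chiDens (c + 1) = fun y => y ^ c * exp (-(y ^ 2 / 2)) /
      (Gamma (((c + 1 : ℕ) : ℝ) / 2) * 2 ^ ((((c + 1 : ℕ) : ℝ) - 2) / 2)) := by
    funext y
    rw [chiDens, Nat.add_sub_cancel, neg_div]
  have hchoose : ∀ m l, (if n + 1 - m - 2 * l ≤ c + 1 then (1 : ℝ) else 0) *
      c.choose (n - m - 2 * l) = c.choose (n - m - 2 * l) := by
    intro m l
    split_ifs with h
    · rw [one_mul]
    · rw [zero_mul, choose_eq_zero_of_lt (by omega), Nat.cast_zero]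
  simp only [Nat.add_sub_cancel, hchoose]
  rw [hdens, iteratedDeriv_div_const, iteratedDeriv_pow_mul_gaussian_eq_sum c n ht.ne',
    neg_div, show ((c + 1 : ℕ) : ℤ) - (n + 1 : ℕ) = c - n by push_cast; ring]
  ring
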